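/- Let ψ₄ be the morphism with ψ₄(0) = 0, ψ₄(1) = 10, and ψ₇ the morphism with ψ₇(0) = 10, ψ₇(1) = 1. (i) For every Sturm number α — an irrational quadratic number in (0,1) with α² = bα + c for rationals b, c and algebraic conjugate ᾱ = b − α satisfying ᾱ ∉ [0,1] — there exists a morphism ψ ≠ identity in the monoid ⟨ψ₄,ψ₇⟩ such that ψ fixes the Sturmian word s'_{α,0}. (ii) Conversely, for every ψ = ψ_{i₁}∘⋯∘ψ_{iₘ} with each iₖ ∈ {4,7}, at least one iₖ = 4 and at least one iₖ = 7, there exists an irrational α ∈ (0,1) such that ψ fixes s'_{α,0}. -/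

import Mathlib

/-- A morphism of the free monoid `{0,1}*`, determined by the images of the two
letters (`false` encodes the letter 0, `true` encodes the letter 1). -/
abbrev Morph := Bool → List Bool

/-- The identity morphism. -/
def idm : Morph := fun a => [a]

/-- Composition of morphisms: `(M σ τ)(a) = σ(τ(a))`. -/
def M (σ τ : Morph) : Morph := fun a => (τ a).flatMap σ

/-- `compAll g [i₁, …, iₙ] = g i₁ ∘ g i₂ ∘ ⋯ ∘ g iₙ` (the identity for `n = 0`). -/
def compAll (g : Bool → Morph) (l : List Bool) : Morph :=
  l.foldr (fun i acc => M (g i) acc) idm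

/-- Iterated composition of a morphism with itself. -/
def mpow (σ : Morph) : ℕ → Morph
  | 0 => idm
  | k + 1 => M σ (mpow σ k)

/-- The length-`n` prefix of an infinite word. -/
def wpref (w : ℕ → Bool) (n : ℕ) : List Bool := (List.range n).map w

/-- `σ` fixes the infinite word `w`: for every `n`, the finite word
`σ(w(0))σ(w(1))⋯σ(w(n-1))` is a prefix of `w`. -/
def Fixes (σ : Morph) (w : ℕ → Bool) : Prop :=
  ∀ n : ℕ, (wpref w n).flatMap σ = wpref w ((wpref w n).flatMap σ).length

/-- The integer value `⌊(n+1)α + ρ⌋ - ⌊nα + ρ⌋` of the Sturmian word `s_{α,ρ}`. -/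
noncomputable def sfl (α ρ : ℝ) (n : ℕ) : ℤ :=
  ⌊((n : ℝ) + 1) * α + ρ⌋ - ⌊(n : ℝ) * α + ρ⌋

/-- The integer value `⌈(n+1)α + ρ⌉ - ⌈nα + ρ⌉` of the Sturmian word `s'_{α,ρ}`. -/
noncomputable def scl (α ρ : ℝ) (n : ℕ) : ℤ :=
  ⌈((n : ℝ) + 1) * α + ρ⌉ - ⌈(n : ℝ) * α + ρ⌉

/-- The Sturmian word `s_{α,ρ}` as an infinite binary word. -/
noncomputable def sw (α ρ : ℝ) : ℕ → Bool := fun n => decide (sfl α ρ n = 1)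

/-- The Sturmian word `s'_{α,ρ}` as an infinite binary word. -/
noncomputable def sw' (α ρ : ℝ) : ℕ → Bool := fun n => decide (scl α ρ n = 1)

/-- The characteristic word `c_α = s_{α,α}`. -/
noncomputable def cw (α : ℝ) : ℕ → Bool := sw α α

/-- `ψ₁ : 0 → 01, 1 → 0` (the Fibonacci morphism, `φ₁`). -/
def psi1 : Morph := fun a => match a with | false => [false, true] | true => [false]

/-- `ψ₃ : 0 → 0, 1 → 01` (the morphism `G`, i.e. `φ₀`). -/
def psi3 : Morph := fun a => match a with | false => [false] | true => [false, true]

/-- `ψ₄ : 0 → 0, 1 → 10`. -/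
def psi4 : Morph := fun a => match a with | false => [false] | true => [true, false]

/-- `ψ₇ : 0 → 10, 1 → 1`. -/
def psi7 : Morph := fun a => match a with | false => [true, false] | true => [true]

/-- `ψ₈ : 0 → 01, 1 → 1`. -/
def psi8 : Morph := fun a => match a with | false => [false, true] | true => [true]

/-- Time reversal of a morphism. -/
def trev (σ : Morph) : Morph := fun a => (σ a).reverse

/-- The exchange morphism `E : 0 → 1, 1 → 0`. -/
def Em : Morph := fun a => [!a]

/-- Generators `φ₀, φ₁` indexed by a bit: `false ↦ φ₀ (= ψ₃)`, `true ↦ φ₁ (= ψ₁)`. -/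
def phiGen : Bool → Morph := fun b => match b with | false => psi3 | true => psi1

/-- Generators of `⟨ψ₁, ψ₃⟩`: `false` encodes the index 1 (`ψ₁`),
`true` encodes the index 3 (`ψ₃`). -/
def g13 : Bool → Morph := fun b => match b with | false => psi1 | true => psi3

/-- Generators of `⟨ψ₃, ψ₈⟩`: `false ↦ ψ₃`, `true ↦ ψ₈`. -/
def g38 : Bool → Morph := fun b => match b with | false => psi3 | true => psi8

/-- Generators of `⟨ψ₄, ψ₇⟩`: `false ↦ ψ₄`, `true ↦ ψ₇`. -/
def g47 : Bool → Morph := fun b => match b with | false => psi4 | true => psi7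

/-- The Kepler matrices `K₀ = [[1,0],[1,1]]` and `K₁ = [[0,1],[1,1]]`. -/
def K : Bool → Matrix (Fin 2) (Fin 2) ℕ
  | false => !![1, 0; 1, 1]
  | true => !![0, 1; 1, 1]

/-!
`ψ₄` and `ψ₇` act on the words `s'_{x,0}` through Möbius maps of the slope:
`ψ₄(s'_{x,0}) = s'_{x/(1+x),0}` and `ψ₇(s'_{x,0}) = s'_{1/(2-x),0}`. Hence a composition of them
fixes `s'_{α,0}` as soon as `α` is a fixed point of the composition of the corresponding maps.

(ii) If both maps occur, the composition minus the identity changes sign on `[0, 1]`, so it has a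
zero in `(0, 1)`; that zero is irrational, because each of the two maps strictly increases the
denominator of a rational number in `(0, 1)`.

(i) A Sturm number `α` is the root in `(0, 1)` of an integral quadratic `q` with `q(0) < 0 < q(1)`.
Pulling `q` back along the slope map whose range contains the root gives a quadratic of the same
kind and discriminant. There are finitely many of these and the pullback step is injective on them,
so the orbit of `q` is periodic, and the maps used along one period fix `α`.
-/

/-- `σ` maps the infinite word `u` onto the infinite word `v`. -/
def MapsWord (σ : Morph) (u v : ℕ → Bool) : Prop :=
  ∀ n, ∃ m, (wpref u n).flatMap σ = wpref v m

lemma wpref_succ (w : ℕ → Bool) (n : ℕ) : wpref w (n + 1) = wpref w n ++ [w n] := by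
  simp [wpref, List.range_succ]

lemma MapsWord.fixes {σ : Morph} {w : ℕ → Bool} (h : MapsWord σ w w) : Fixes σ w := by
  intro n
  obtain ⟨m, hm⟩ := h n
  rw [hm]
  simp [wpref]

lemma mapsWord_idm (u : ℕ → Bool) : MapsWord idm u u :=
  fun n => ⟨n, List.flatMap_singleton' _⟩

lemma MapsWord.comp {σ τ : Morph} {u v w : ℕ → Bool}
    (hσ : MapsWord σ v w) (hτ : MapsWord τ u v) : MapsWord (M σ τ) u w := by
  intro n
  obtain ⟨m, hm⟩ := hτ n
  obtain ⟨k, hk⟩ := hσ m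
  exact ⟨k, by rw [← hk, ← hm, List.flatMap_assoc]; rfl⟩

lemma mapsWord_of_blocks {σ : Morph} {u v : ℕ → Bool} (f : ℕ → ℕ) (hf₀ : f 0 = 0)
    (hf : ∀ n, wpref v (f (n + 1)) = wpref v (f n) ++ σ (u n)) : MapsWord σ u v := by
  refine fun n => ⟨f n, ?_⟩
  induction n with
  | zero => simp [wpref, hf₀]
  | succ n ih => rw [wpref_succ, List.flatMap_append, ih, hf, List.flatMap_singleton]

/-- The number of letters `1` among the first `n` letters of `s'_{β,0}`. -/
noncomputable def ceilMul (β : ℝ) (n : ℕ) : ℕ := ⌈(n : ℝ) * β⌉₊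

lemma ceilMul_zero (β : ℝ) : ceilMul β 0 = 0 := by simp [ceilMul]

lemma Nat.ceil_eq_of_lt_of_le {x : ℝ} {k : ℕ} (h₁ : (k : ℝ) < x + 1) (h₂ : x ≤ k) :
    ⌈x⌉₊ = k := by
  refine le_antisymm (Nat.ceil_le.2 h₂) ?_
  rcases k with _ | k
  · exact Nat.zero_le _
  · exact Nat.lt_ceil.2 (by push_cast at h₁; linarith)

lemma sw'_zero_apply {β : ℝ} (hβ : 0 ≤ β) (n : ℕ) :
    sw' β 0 n = decide (ceilMul β (n + 1) = ceilMul β n + 1) := by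
  have h₁ := Int.natCast_ceil_eq_ceil (by positivity : (0 : ℝ) ≤ ((n : ℝ) + 1) * β)
  have h₂ := Int.natCast_ceil_eq_ceil (by positivity : (0 : ℝ) ≤ (n : ℝ) * β)
  simp only [sw', scl, add_zero, ← h₁, ← h₂, ceilMul, Nat.cast_succ]
  exact decide_eq_decide.2 (by omega)

lemma ceilMul_succ {β : ℝ} (h₀ : 0 ≤ β) (h₁ : β ≤ 1) (n : ℕ) :
    ceilMul β (n + 1) = ceilMul β n ∨ ceilMul β (n + 1) = ceilMul β n + 1 := by
  have hle : ceilMul β n ≤ ceilMul β (n + 1) :=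
    Nat.ceil_mono (by push_cast; nlinarith)
  have hge : ceilMul β (n + 1) ≤ ceilMul β n + 1 := by
    rw [ceilMul, ceilMul, ← Nat.ceil_add_one (by positivity)]
    exact Nat.ceil_mono (by push_cast; nlinarith)
  omega

lemma ceilMul_le {β : ℝ} (h₁ : β ≤ 1) (n : ℕ) : ceilMul β n ≤ n :=
  Nat.ceil_le.2 (by nlinarith [(n.cast_nonneg : (0 : ℝ) ≤ n)])

lemma ceilMul_bounds {β : ℝ} (hβ : 0 ≤ β) (n : ℕ) :
    (n : ℝ) * β ≤ ceilMul β n ∧ (ceilMul β n : ℝ) < n * β + 1 :=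
  ⟨Nat.le_ceil _, Nat.ceil_lt_add_one (by positivity)⟩

section Psi4

variable {β : ℝ} (hβ : 0 ≤ β)
include hβ

lemma ceilMul_div_one_add_add_ceilMul (n : ℕ) :
    ceilMul (β / (1 + β)) (n + ceilMul β n) = ceilMul β n := by
  obtain ⟨h₁, h₂⟩ := ceilMul_bounds hβ n
  apply Nat.ceil_eq_of_lt_of_le <;> push_cast <;> rw [← mul_div_assoc]
  · rw [div_add_one (by positivity), lt_div_iff₀ (by positivity)]; nlinarith
  · rw [div_le_iff₀ (by positivity)]; nlinarith

lemma ceilMul_div_one_add_add_ceilMul_add_one {n : ℕ}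
    (hn : ceilMul β (n + 1) = ceilMul β n + 1) :
    ceilMul (β / (1 + β)) (n + ceilMul β n + 1) = ceilMul β n + 1 := by
  obtain ⟨h₁, h₂⟩ := ceilMul_bounds hβ n
  have h₃ : (ceilMul β n : ℝ) < (n + 1) * β := by
    exact_mod_cast Nat.lt_ceil.1 (by omega : ceilMul β n < ceilMul β (n + 1))
  apply Nat.ceil_eq_of_lt_of_le <;> push_cast <;> rw [← mul_div_assoc]
  · rw [div_add_one (by positivity), lt_div_iff₀ (by positivity)]; nlinarith
  · rw [div_le_iff₀ (by positivity)]; nlinarith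

end Psi4

theorem mapsWord_psi4 {β : ℝ} (h₀ : 0 ≤ β) (h₁ : β ≤ 1) :
    MapsWord psi4 (sw' β 0) (sw' (β / (1 + β)) 0) := by
  refine mapsWord_of_blocks (fun n => n + ceilMul β n) (by simp [ceilMul_zero]) fun n => ?_
  have e₀ := ceilMul_div_one_add_add_ceilMul h₀ n
  have e₁ := ceilMul_div_one_add_add_ceilMul h₀ (n + 1)
  have hα : 0 ≤ β / (1 + β) := by positivity
  rcases ceilMul_succ h₀ h₁ n with h | h
  · have hf : n + 1 + ceilMul β (n + 1) = n + ceilMul β n + 1 := by omega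
    rw [hf] at e₁ ⊢
    simp only [wpref_succ, sw'_zero_apply h₀, sw'_zero_apply hα, h, e₀, e₁]
    simp [psi4]
  · have e₂ := ceilMul_div_one_add_add_ceilMul_add_one h₀ h
    have hf : n + 1 + ceilMul β (n + 1) = n + ceilMul β n + 1 + 1 := by omega
    rw [hf] at e₁ ⊢
    simp only [wpref_succ, sw'_zero_apply h₀, sw'_zero_apply hα, h, e₀, e₁, e₂]
    simp [psi4]

section Psi7

variable {β : ℝ} (h₀ : 0 ≤ β) (h₁ : β ≤ 1)
include h₀ h₁

lemma ceilMul_one_div_two_sub_two_mul_sub_ceilMul (n : ℕ) :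
    ceilMul (1 / (2 - β)) (2 * n - ceilMul β n) = n := by
  obtain ⟨h₂, h₃⟩ := ceilMul_bounds h₀ n
  have hc : ceilMul β n ≤ 2 * n := by have := ceilMul_le h₁ n; omega
  apply Nat.ceil_eq_of_lt_of_le <;> push_cast [hc] <;> rw [mul_one_div]
  · rw [div_add_one (by linarith), lt_div_iff₀ (by linarith)]; nlinarith
  · rw [div_le_iff₀ (by linarith)]; nlinarith

lemma ceilMul_one_div_two_sub_two_mul_sub_ceilMul_add_one (n : ℕ) :
    ceilMul (1 / (2 - β)) (2 * n - ceilMul β n + 1) = n + 1 := by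
  obtain ⟨h₂, h₃⟩ := ceilMul_bounds h₀ n
  have hc : ceilMul β n ≤ 2 * n := by have := ceilMul_le h₁ n; omega
  apply Nat.ceil_eq_of_lt_of_le <;> push_cast [hc] <;> rw [mul_one_div]
  · rw [div_add_one (by linarith), lt_div_iff₀ (by linarith)]; nlinarith
  · rw [div_le_iff₀ (by linarith)]; nlinarith

end Psi7

theorem mapsWord_psi7 {β : ℝ} (h₀ : 0 ≤ β) (h₁ : β ≤ 1) :
    MapsWord psi7 (sw' β 0) (sw' (1 / (2 - β)) 0) := by
  refine mapsWord_of_blocks (fun n => 2 * n - ceilMul β n) (by simp [ceilMul_zero]) fun n => ?_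
  have e₀ := ceilMul_one_div_two_sub_two_mul_sub_ceilMul h₀ h₁ n
  have e₁ := ceilMul_one_div_two_sub_two_mul_sub_ceilMul h₀ h₁ (n + 1)
  have e₂ := ceilMul_one_div_two_sub_two_mul_sub_ceilMul_add_one h₀ h₁ n
  have hα : 0 ≤ 1 / (2 - β) := one_div_nonneg.2 (by linarith)
  have hc := ceilMul_le h₁ n
  rcases ceilMul_succ h₀ h₁ n with h | h
  · have hf : 2 * (n + 1) - ceilMul β (n + 1) = 2 * n - ceilMul β n + 1 + 1 := by omega
    rw [hf] at e₁ ⊢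
    simp only [wpref_succ, sw'_zero_apply h₀, sw'_zero_apply hα, h, e₀, e₁, e₂]
    simp [psi7]
  · have hf : 2 * (n + 1) - ceilMul β (n + 1) = 2 * n - ceilMul β n + 1 := by omega
    rw [hf] at e₁ ⊢
    simp only [wpref_succ, sw'_zero_apply h₀, sw'_zero_apply hα, h, e₀, e₁]
    simp [psi7]

section SlopeMap

variable {𝕜 : Type*}

/-- The slope of `g47 i (s'_{x,0})` as a function of the slope `x`. -/
def slopeMap [DivisionRing 𝕜] : Bool → 𝕜 → 𝕜
  | false, x => x / (1 + x)
  | true, x => 1 / (2 - x)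

def slopeMapAll [DivisionRing 𝕜] (l : List Bool) (x : 𝕜) : 𝕜 :=
  l.foldr slopeMap x

@[simp] lemma slopeMapAll_nil [DivisionRing 𝕜] (x : 𝕜) : slopeMapAll [] x = x := rfl

@[simp] lemma slopeMapAll_cons [DivisionRing 𝕜] (i : Bool) (l : List Bool) (x : 𝕜) :
    slopeMapAll (i :: l) x = slopeMap i (slopeMapAll l x) := rfl

variable [Field 𝕜] [LinearOrder 𝕜] [IsStrictOrderedRing 𝕜] {x : 𝕜}

lemma slopeMap_mem_Icc (i : Bool) (hx : x ∈ Set.Icc 0 1) : slopeMap i x ∈ Set.Icc 0 1 := by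
  obtain ⟨h₀, h₁⟩ := hx
  cases i
  · exact ⟨by simp only [slopeMap]; positivity, div_le_one_of_le₀ (by linarith) (by linarith)⟩
  · exact ⟨one_div_nonneg.2 (by linarith), div_le_one_of_le₀ (by linarith) (by linarith)⟩

lemma slopeMap_mem_Ioo (i : Bool) (hx : x ∈ Set.Ioo 0 1) : slopeMap i x ∈ Set.Ioo 0 1 := by
  obtain ⟨h₀, h₁⟩ := hx
  cases i
  · exact ⟨by simp only [slopeMap]; positivity, (div_lt_one (by linarith)).2 (by linarith)⟩
  · exact ⟨one_div_pos.2 (by linarith), (div_lt_one (by linarith)).2 (by linarith)⟩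

lemma slopeMapAll_mem_Icc (l : List Bool) (hx : x ∈ Set.Icc 0 1) :
    slopeMapAll l x ∈ Set.Icc 0 1 := by
  induction l with
  | nil => exact hx
  | cons i l ih => exact slopeMap_mem_Icc i ih

lemma slopeMapAll_mem_Ioo (l : List Bool) (hx : x ∈ Set.Ioo 0 1) :
    slopeMapAll l x ∈ Set.Ioo 0 1 := by
  induction l with
  | nil => exact hx
  | cons i l ih => exact slopeMap_mem_Ioo i ih

end SlopeMap

theorem mapsWord_g47 (i : Bool) {x : ℝ} (hx : x ∈ Set.Icc 0 1) :
    MapsWord (g47 i) (sw' x 0) (sw' (slopeMap i x) 0) := by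
  cases i
  · exact mapsWord_psi4 hx.1 hx.2
  · exact mapsWord_psi7 hx.1 hx.2

theorem mapsWord_compAll_g47 (l : List Bool) {x : ℝ} (hx : x ∈ Set.Icc 0 1) :
    MapsWord (compAll g47 l) (sw' x 0) (sw' (slopeMapAll l x) 0) := by
  induction l with
  | nil => exact mapsWord_idm _
  | cons i l ih => exact (mapsWord_g47 i (slopeMapAll_mem_Icc l hx)).comp ih

theorem fixes_compAll_g47 {l : List Bool} {x : ℝ} (hx : x ∈ Set.Icc 0 1)
    (h : Function.IsFixedPt (slopeMapAll l) x) : Fixes (compAll g47 l) (sw' x 0) := by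
  have := mapsWord_compAll_g47 l hx
  rw [h] at this
  exact this.fixes

lemma mem_compAll_g47_self (l : List Bool) (a : Bool) : a ∈ compAll g47 l a := by
  induction l with
  | nil => simp [compAll, idm]
  | cons i l ih =>
    refine List.mem_flatMap.2 ⟨a, ih, ?_⟩
    cases i <;> cases a <;> simp [g47, psi4, psi7]

/-- Each `g47 j` sends every letter to a word containing it, and `g47 i` sends `!i` to a word of
length two; so `compAll g47 (i :: l)` sends `!i` to a word of length at least two. -/
theorem compAll_g47_ne_idm {l : List Bool} (hl : l ≠ []) : compAll g47 l ≠ idm := by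
  obtain ⟨i, l, rfl⟩ := List.exists_cons_of_ne_nil hl
  obtain ⟨s, t, hst⟩ := List.append_of_mem (mem_compAll_g47_self l (!i))
  have hlen : 2 ≤ (compAll g47 (i :: l) (!i)).length := by
    change 2 ≤ ((compAll g47 l (!i)).flatMap (g47 i)).length
    rw [hst, List.flatMap_append, List.flatMap_cons]
    cases i <;> simp [g47, psi4, psi7] <;> omega
  intro h
  simp [h, idm] at hlen

lemma continuousOn_slopeMapAll (l : List Bool) :
    ContinuousOn (slopeMapAll l : ℝ → ℝ) (Set.Icc 0 1) := by
  induction l with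
  | nil => exact continuousOn_id
  | cons i l ih =>
    refine ContinuousOn.comp (t := Set.Icc 0 1) ?_ ih fun x hx => slopeMapAll_mem_Icc l hx
    cases i
    · exact continuousOn_id.div (by fun_prop) fun x hx => (by linarith [hx.1] : (0 : ℝ) < 1 + x).ne'
    · exact continuousOn_const.div (by fun_prop) fun x hx =>
        (by linarith [hx.2] : (0 : ℝ) < 2 - x).ne'

lemma slopeMapAll_zero_pos {l : List Bool} (ht : true ∈ l) : 0 < slopeMapAll l (0 : ℝ) := by
  induction l with
  | nil => simp at ht
  | cons i l ih =>
    have hy := slopeMapAll_mem_Icc l (Set.left_mem_Icc.2 (zero_le_one' ℝ))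
    cases i
    · have := ih (by simpa using ht)
      rw [slopeMapAll_cons, slopeMap]
      positivity
    · rw [slopeMapAll_cons, slopeMap]
      exact one_div_pos.2 (by linarith [hy.2])

lemma slopeMapAll_one_lt {l : List Bool} (hf : false ∈ l) : slopeMapAll l (1 : ℝ) < 1 := by
  induction l with
  | nil => simp at hf
  | cons i l ih =>
    have hy := slopeMapAll_mem_Icc l (Set.right_mem_Icc.2 (zero_le_one' ℝ))
    rw [slopeMapAll_cons]
    cases i <;> rw [slopeMap]
    · exact (div_lt_one (by linarith [hy.1])).2 (by linarith [hy.1])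
    · exact (div_lt_one (by linarith [hy.2])).2 (by linarith [ih (by simpa using hf)])

theorem exists_isFixedPt_slopeMapAll {l : List Bool} (hf : false ∈ l) (ht : true ∈ l) :
    ∃ x ∈ Set.Ioo (0 : ℝ) 1, Function.IsFixedPt (slopeMapAll l) x := by
  have hcont := (continuousOn_slopeMapAll l).sub continuousOn_id
  obtain ⟨x, hx, hx0⟩ := intermediate_value_Ioo' zero_le_one hcont
    ⟨sub_neg.2 (slopeMapAll_one_lt hf), sub_pos.2 (slopeMapAll_zero_pos ht)⟩
  exact ⟨x, hx, sub_eq_zero.1 hx0⟩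

lemma Rat.den_le_of_eq_div {q : ℚ} {a b : ℤ} (hb : 0 < b) (h : q = a / b) : (q.den : ℤ) ≤ b :=
  Int.le_of_dvd hb (h ▸ Rat.divInt_eq_div a b ▸ Rat.den_dvd a b)

/-- If `slopeMap i q = n / d` in lowest terms, then `q = n / (d - n)`, resp. `q = (2n - d) / n`. -/
lemma den_lt_den_slopeMap (i : Bool) {q : ℚ} (hq : q ∈ Set.Ioo 0 1) :
    q.den < (slopeMap i q).den := by
  set z := slopeMap i q with hz
  obtain ⟨hz₀, hz₁⟩ := slopeMap_mem_Ioo i hq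
  have hn : (z.num : ℚ) = z * z.den := (Rat.mul_den_eq_num z).symm
  have hd : (0 : ℚ) < z.den := by exact_mod_cast z.pos
  have hn₀ : 0 < z.num := Rat.num_pos.2 hz₀
  have hn₁ : z.num < z.den := by exact_mod_cast (show (z.num : ℚ) < z.den by rw [hn]; nlinarith)
  suffices (q.den : ℤ) < z.den by exact_mod_cast this
  cases i
  · have : q = z.num / ((z.den - z.num : ℤ) : ℚ) := by
      have h1 : (1 : ℚ) + q ≠ 0 := by linarith [hq.1]
      have h2 : ((z.den - z.num : ℤ) : ℚ) ≠ 0 := by exact_mod_cast (by omega : z.den - z.num ≠ 0)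
      rw [eq_div_iff h2]
      push_cast
      rw [hn, hz, slopeMap]
      field_simp
      ring
    linarith [Rat.den_le_of_eq_div (by omega) this]
  · have : q = ((2 * z.num - z.den : ℤ) : ℚ) / z.num := by
      have h1 : (2 : ℚ) - q ≠ 0 := by linarith [hq.2]
      rw [eq_div_iff (by exact_mod_cast hn₀.ne')]
      push_cast
      rw [hn, hz, slopeMap]
      field_simp
      ring
    linarith [Rat.den_le_of_eq_div hn₀ this]

lemma den_le_den_slopeMapAll (l : List Bool) {q : ℚ} (hq : q ∈ Set.Ioo 0 1) :
    q.den ≤ (slopeMapAll l q).den := by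
  induction l with
  | nil => rfl
  | cons i l ih => exact ih.trans (den_lt_den_slopeMap i (slopeMapAll_mem_Ioo l hq)).le

lemma Rat.cast_slopeMapAll {𝕜 : Type*} [DivisionRing 𝕜] [CharZero 𝕜] (l : List Bool) (q : ℚ) :
    ((slopeMapAll l q : ℚ) : 𝕜) = slopeMapAll l (q : 𝕜) := by
  induction l with
  | nil => rfl
  | cons i l ih => cases i <;> simp [slopeMap, ih]

theorem irrational_of_isFixedPt_slopeMapAll {l : List Bool} (hl : l ≠ []) {x : ℝ}
    (hx : x ∈ Set.Ioo 0 1) (h : Function.IsFixedPt (slopeMapAll l) x) : Irrational x := by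
  rintro ⟨q, rfl⟩
  have hq : q ∈ Set.Ioo 0 1 := ⟨by exact_mod_cast hx.1, by exact_mod_cast hx.2⟩
  have hfix : slopeMapAll l q = q := by exact_mod_cast (Rat.cast_slopeMapAll l q).trans h
  obtain ⟨i, l, rfl⟩ := List.exists_cons_of_ne_nil hl
  have := (den_le_den_slopeMapAll l hq).trans_lt (den_lt_den_slopeMap i (slopeMapAll_mem_Ioo l hq))
  rw [← slopeMapAll_cons, hfix] at this
  exact lt_irrefl _ this

theorem Set.InjOn.exists_pos_iterate_eq_self {α : Type*} {f : α → α} {s : Set α}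
    (hinj : Set.InjOn f s) (hs : s.Finite) (hf : Set.MapsTo f s s) {x : α} (hx : x ∈ s) :
    ∃ n > 0, f^[n] x = x := by
  have := hs.to_subtype
  obtain ⟨n, hn, hper⟩ := Function.mem_periodicPts.1
    (((Set.MapsTo.restrict_inj hf).2 hinj).mem_periodicPts ⟨x, hx⟩)
  exact ⟨n, hn, by simpa [Set.MapsTo.coe_iterate_restrict] using congrArg Subtype.val hper.eq⟩

@[ext] structure IntQuad where
  a : ℤ
  b : ℤ
  c : ℤ

namespace IntQuad

variable {q : IntQuad}

def eval (q : IntQuad) (x : ℝ) : ℝ := q.a * x ^ 2 + q.b * x + q.c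

def disc (q : IntQuad) : ℤ := q.b ^ 2 - 4 * q.a * q.c

/-- `q(0) < 0 < q(1)`. -/
def Straddles (q : IntQuad) : Prop := q.c < 0 ∧ 0 < q.a + q.b + q.c

/-- `(1 + x)² q(x / (1 + x))`, resp. `(2 - x)² q(1 / (2 - x))`: the pullback of `q` along
`slopeMap i`, cleared of denominators. -/
def pullback : Bool → IntQuad → IntQuad
  | false, q => ⟨q.a + q.b + q.c, q.b + 2 * q.c, q.c⟩
  | true, q => ⟨q.c, -(q.b + 4 * q.c), q.a + 2 * q.b + 4 * q.c⟩

/-- The sign of `4 q(1/2)` tells on which side of `1/2` the root of `q` in `(0, 1)` lies. -/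
def branch (q : IntQuad) : Bool := decide (q.a + 2 * q.b + 4 * q.c < 0)

def next (q : IntQuad) : IntQuad := q.pullback q.branch

lemma disc_next (q : IntQuad) : q.next.disc = q.disc := by
  unfold next
  cases q.branch <;> simp only [pullback, disc] <;> ring

lemma four_mul_eval_half_ne_zero (hd : ¬IsSquare q.disc) : q.a + 2 * q.b + 4 * q.c ≠ 0 :=
  fun h => hd ⟨q.a + q.b, by unfold disc; linear_combination (-q.a) * h⟩

lemma Straddles.next (hq : q.Straddles) (hd : ¬IsSquare q.disc) : q.next.Straddles := by
  have := four_mul_eval_half_ne_zero hd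
  unfold IntQuad.next branch Straddles at *
  by_cases h : q.a + 2 * q.b + 4 * q.c < 0 <;>
    simp only [h, decide_true, decide_false, pullback, true_and] <;> omega

/-- The branch taken is recorded in the sign of the leading coefficient of the image. -/
lemma injOn_next : Set.InjOn next {q | q.Straddles} := by
  intro q₁ h₁ q₂ h₂ h
  unfold IntQuad.next branch at h
  simp only [Set.mem_ofPred_eq, Straddles] at h₁ h₂
  by_cases c₁ : q₁.a + 2 * q₁.b + 4 * q₁.c < 0 <;> by_cases c₂ : q₂.a + 2 * q₂.b + 4 * q₂.c < 0 <;>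
    simp only [c₁, c₂, decide_true, decide_false, pullback, IntQuad.mk.injEq] at h <;>
    ext <;> omega

lemma finite_setOf_straddles_disc (Δ : ℤ) : {q : IntQuad | q.Straddles ∧ q.disc = Δ}.Finite := by
  let e : IntQuad → ℤ × ℤ × ℤ := fun q => (q.a + q.b + q.c, q.b + 2 * q.c, q.c)
  have he : Function.Injective e := fun q₁ q₂ h => by
    simp only [e, Prod.mk.injEq] at h
    ext <;> omega
  refine Set.Finite.of_finite_image ((Set.finite_Icc (1, -Δ, -Δ) (Δ, Δ, -1)).subset ?_) he.injOn
  rintro _ ⟨q, ⟨⟨hc, hs⟩, hd⟩, rfl⟩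
  have key : Δ = (q.b + 2 * q.c) ^ 2 + 4 * (q.a + q.b + q.c) * (-q.c) := by rw [← hd, disc]; ring
  have h₁ : q.a + q.b + q.c ≤ (q.a + q.b + q.c) * (-q.c) := by nlinarith
  have h₂ : -q.c ≤ (q.a + q.b + q.c) * (-q.c) := by nlinarith
  have h₃ : |q.b + 2 * q.c| ≤ (q.b + 2 * q.c) ^ 2 := by
    rw [← sq_abs]; nlinarith [abs_nonneg (q.b + 2 * q.c)]
  simp only [e, Set.mem_Icc, Prod.mk_le_mk]
  rw [abs_le] at h₃
  refine ⟨⟨?_, ?_, ?_⟩, ?_, ?_, ?_⟩ <;> nlinarith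

variable {x y : ℝ}

lemma eval_pullback_eq_zero (i : Bool) (hy : y ∈ Set.Ioo 0 1) (h : q.eval (slopeMap i y) = 0) :
    (q.pullback i).eval y = 0 := by
  obtain ⟨h₀, h₁⟩ := hy
  cases i <;> simp only [eval, slopeMap, pullback] at h ⊢ <;> push_cast
  · have : (1 : ℝ) + y ≠ 0 := by linarith
    field_simp at h
    linear_combination h
  · have : (2 : ℝ) - y ≠ 0 := by linarith
    field_simp at h
    linear_combination h

/-- Two roots `x, y` in `(0, 1)` would give `q(0) = a x y` and `q(1) = a (1 - x) (1 - y)`, of the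
same sign. -/
lemma eq_of_eval_eq_zero (hq : q.Straddles) (hx : x ∈ Set.Ioo 0 1) (hy : y ∈ Set.Ioo 0 1)
    (hrx : q.eval x = 0) (hry : q.eval y = 0) : x = y := by
  by_contra hne
  obtain ⟨hc, hs⟩ := hq
  have hc' : (q.c : ℝ) < 0 := by exact_mod_cast hc
  have hs' : (0 : ℝ) < q.a + q.b + q.c := by exact_mod_cast hs
  unfold eval at hrx hry
  have hb : (q.b : ℝ) = -q.a * (x + y) :=
    mul_left_cancel₀ (sub_ne_zero.2 hne) (by linear_combination hrx - hry)
  have hc₁ : (q.c : ℝ) = q.a * x * y := by linear_combination hrx - x * hb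
  have ha : (q.a : ℝ) < 0 := by
    by_contra! ha
    nlinarith [mul_pos hx.1 hy.1]
  nlinarith [mul_pos (sub_pos.2 hx.2) (sub_pos.2 hy.2)]

lemma exists_eval_next_eq_zero (hq : q.Straddles) (hd : ¬IsSquare q.disc) (hx : x ∈ Set.Ioo 0 1)
    (hr : q.eval x = 0) : ∃ y ∈ Set.Ioo 0 1, q.next.eval y = 0 ∧ x = slopeMap q.branch y := by
  obtain ⟨hc, hs⟩ := hq
  obtain ⟨hx₀, hx₁⟩ := hx
  have hc' : (q.c : ℝ) < 0 := by exact_mod_cast hc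
  have hs' : (0 : ℝ) < q.a + q.b + q.c := by exact_mod_cast hs
  unfold eval at hr
  -- `q(t) = (t - x)(a t + a x + b)`, evaluated at `t = 0`, `1` and `1/2`
  have k₀ : 0 < q.a * x + q.b := by nlinarith
  have k₁ : 0 < q.a + q.a * x + q.b := by nlinarith
  have key : (q.a + 2 * q.b + 4 * q.c : ℝ) = (1 - 2 * x) * (q.a + 2 * q.a * x + 2 * q.b) := by
    linear_combination 4 * hr
  have hne := four_mul_eval_half_ne_zero hd
  suffices ∃ y ∈ Set.Ioo 0 1, x = slopeMap q.branch y by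
    obtain ⟨y, hy, rfl⟩ := this
    exact ⟨y, hy, eval_pullback_eq_zero _ hy hr, rfl⟩
  unfold branch
  by_cases h : q.a + 2 * q.b + 4 * q.c < 0
  · have h' : (q.a + 2 * q.b + 4 * q.c : ℝ) < 0 := by exact_mod_cast h
    have hx : 1 / 2 < x := by nlinarith
    have h₁ : 1 / x < 2 := (div_lt_iff₀ hx₀).2 (by linarith)
    have h₂ := one_lt_one_div hx₀ hx₁
    refine ⟨2 - 1 / x, ⟨by linarith, by linarith⟩, ?_⟩
    simp only [h, decide_true, slopeMap]
    field_simp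
    ring
  · have h' : 0 < (q.a + 2 * q.b + 4 * q.c : ℝ) := by
      exact_mod_cast (by omega : 0 < q.a + 2 * q.b + 4 * q.c)
    have hx : x < 1 / 2 := by nlinarith
    refine ⟨x / (1 - x), ⟨by apply div_pos <;> linarith, by rw [div_lt_one] <;> linarith⟩, ?_⟩
    simp only [h, decide_false, slopeMap]
    field_simp
    ring

def orbitWord (q : IntQuad) : ℕ → List Bool
  | 0 => []
  | n + 1 => q.branch :: q.next.orbitWord n

lemma length_orbitWord (q : IntQuad) (n : ℕ) : (q.orbitWord n).length = n := by
  induction n generalizing q with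
  | zero => rfl
  | succ n ih => simp [orbitWord, ih]

lemma exists_eval_iterate_next_eq_zero (n : ℕ) (hq : q.Straddles) (hd : ¬IsSquare q.disc)
    (hx : x ∈ Set.Ioo 0 1) (hr : q.eval x = 0) :
    ∃ y ∈ Set.Ioo 0 1, (next^[n] q).eval y = 0 ∧ x = slopeMapAll (q.orbitWord n) y := by
  induction n generalizing q x with
  | zero => exact ⟨x, hx, hr, rfl⟩
  | succ n ih =>
    obtain ⟨y, hy, hry, rfl⟩ := exists_eval_next_eq_zero hq hd hx hr
    obtain ⟨z, hz, hrz, rfl⟩ := ih (hq.next hd) (q.disc_next ▸ hd) hy hry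
    exact ⟨z, hz, hrz, rfl⟩

/-- `next` permutes the finitely many straddling quadratics of a given discriminant, so the
orbit of `q` is periodic, and a period returns the root to itself. -/
theorem exists_isFixedPt_slopeMapAll (hq : q.Straddles) (hd : ¬IsSquare q.disc)
    (hx : x ∈ Set.Ioo 0 1) (hr : q.eval x = 0) :
    ∃ l ≠ [], Function.IsFixedPt (slopeMapAll l) x := by
  have hmaps : Set.MapsTo next {p : IntQuad | p.Straddles ∧ p.disc = q.disc}
      {p | p.Straddles ∧ p.disc = q.disc} := fun p ⟨hp, hpd⟩ =>
    ⟨hp.next (hpd ▸ hd), (disc_next p).trans hpd⟩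
  obtain ⟨n, hn, hper⟩ := (injOn_next.mono fun _ hp => hp.1).exists_pos_iterate_eq_self
    (finite_setOf_straddles_disc q.disc) hmaps ⟨hq, rfl⟩
  obtain ⟨y, hy, hry, hxy⟩ := exists_eval_iterate_next_eq_zero n hq hd hx hr
  rw [hper] at hry
  refine ⟨q.orbitWord n, ?_, ?_⟩
  · rw [← List.length_pos_iff, length_orbitWord]
    exact hn
  · obtain rfl := eq_of_eval_eq_zero hq hy hx hry hr
    exact hxy.symm

lemma straddles_of_eval (h₀ : q.eval 0 < 0) (h₁ : 0 < q.eval 1) : q.Straddles := by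
  simp only [eval] at h₀ h₁
  constructor
  · exact_mod_cast (by simpa using h₀ : (q.c : ℝ) < 0)
  · exact_mod_cast (by simpa using h₁ : (0 : ℝ) < q.a + q.b + q.c)

lemma not_isSquare_disc (hx : Irrational x) (ha : q.a ≠ 0) (hr : q.eval x = 0) :
    ¬IsSquare q.disc := by
  rintro ⟨k, hk⟩
  have hirr : Irrational (((2 * q.a : ℤ) : ℝ) * x + q.b) :=
    (hx.intCast_mul (by omega)).add_intCast q.b
  have hsq : (((2 * q.a : ℤ) : ℝ) * x + q.b) ^ 2 = (k : ℝ) ^ 2 := by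
    have : (q.disc : ℝ) = k * k := by exact_mod_cast hk
    simp only [eval, disc] at hr this
    push_cast at this ⊢
    linear_combination this + 4 * q.a * hr
  rcases sq_eq_sq_iff_eq_or_eq_neg.1 hsq with h | h
  · exact hirr.ne_int k h
  · exact hirr.ne_int (-k) (by rw [h]; push_cast; rfl)

/-- For a Sturm number `α` with `α² = bα + c`, clearing the denominators of
`±(x - α)(x - ᾱ) = ±(x² - bx - c)` gives an integral quadratic straddling `[0, 1]`; the sign is
`-` when `ᾱ > 1`. -/
theorem exists_straddles_of_sq_eq {α : ℝ} (hirr : Irrational α) (h₀ : 0 < α) (h₁ : α < 1) {b c : ℚ}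
    (hquad : α ^ 2 = b * α + c) (hconj : (b : ℝ) - α < 0 ∨ 1 < (b : ℝ) - α) :
    ∃ q : IntQuad, q.Straddles ∧ ¬IsSquare q.disc ∧ q.eval α = 0 := by
  let qε : ℤ → IntQuad := fun ε =>
    ⟨ε * (b.den * c.den), -ε * (b.num * c.den), -ε * (c.num * b.den)⟩
  have heval : ∀ ε x, (qε ε).eval x = ε * (b.den * c.den) * ((x - α) * (x - (b - α))) := by
    intro ε x
    have hb : (b.num : ℝ) = b * b.den := by exact_mod_cast (Rat.mul_den_eq_num b).symm
    have hc : (c.num : ℝ) = c * c.den := by exact_mod_cast (Rat.mul_den_eq_num c).symm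
    simp only [eval, qε]
    push_cast
    rw [hb, hc]
    linear_combination ((ε : ℝ) * b.den * c.den) * hquad
  have hd : ∀ ε ≠ 0, ¬IsSquare (qε ε).disc := fun ε hε =>
    not_isSquare_disc hirr (mul_ne_zero hε (by positivity)) (by rw [heval]; ring)
  have hpos : (0 : ℝ) < b.den * c.den := by positivity
  rcases hconj with h | h
  · refine ⟨qε 1, straddles_of_eval ?_ ?_, hd 1 one_ne_zero, by rw [heval]; ring⟩ <;>
      rw [heval] <;> push_cast
    · nlinarith [mul_pos hpos h₀]
    · nlinarith [mul_pos hpos (sub_pos.2 h₁)]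
  · refine ⟨qε (-1), straddles_of_eval ?_ ?_, hd (-1) (by norm_num), by rw [heval]; ring⟩ <;>
      rw [heval] <;> push_cast
    · nlinarith [mul_pos hpos h₀]
    · nlinarith [mul_pos hpos (sub_pos.2 h₁)]

end IntQuad

/-- (i) For every Sturm number `α` there is a non-identity
`ψ ∈ ⟨ψ₄, ψ₇⟩` fixing `s'_{α,0}`. (ii) Conversely, every composition of `ψ₄`'s
and `ψ₇`'s containing both generators (here `false` encodes `ψ₄` and `true`
encodes `ψ₇`) fixes `s'_{α,0}` for some irrational `α ∈ (0,1)`. -/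
theorem psi47_and_ceiling_words :
    (∀ α : ℝ, Irrational α → 0 < α → α < 1 →
      ∀ b c : ℚ, α ^ 2 = (b : ℝ) * α + (c : ℝ) →
        ((b : ℝ) - α < 0 ∨ 1 < (b : ℝ) - α) →
        ∃ ψ : Morph, (∃ l : List Bool, ψ = compAll g47 l) ∧ ψ ≠ idm ∧
          Fixes ψ (sw' α 0)) ∧
    (∀ l : List Bool, false ∈ l → true ∈ l →
      ∃ α : ℝ, Irrational α ∧ 0 < α ∧ α < 1 ∧ Fixes (compAll g47 l) (sw' α 0)) := by
  refine ⟨fun α hirr h₀ h₁ b c hquad hconj => ?_, fun l hf ht => ?_⟩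
  · obtain ⟨q, hq, hd, hr⟩ := IntQuad.exists_straddles_of_sq_eq hirr h₀ h₁ hquad hconj
    obtain ⟨l, hl, hfix⟩ := IntQuad.exists_isFixedPt_slopeMapAll hq hd ⟨h₀, h₁⟩ hr
    exact ⟨compAll g47 l, ⟨l, rfl⟩, compAll_g47_ne_idm hl, fixes_compAll_g47 ⟨h₀.le, h₁.le⟩ hfix⟩
  · obtain ⟨α, hα, hfix⟩ := exists_isFixedPt_slopeMapAll hf ht
    exact ⟨α, irrational_of_isFixedPt_slopeMapAll (List.ne_nil_of_mem hf) hα hfix, hα.1, hα.2,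
      fixes_compAll_g47 (Set.Ioo_subset_Icc_self hα) hfix⟩
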